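/- Let F = ℚ(α,β,z₀,z₁) be the field of rational functions in four indeterminates, and let ∂ : F → F be the unique derivation extending formal partial differentiation with respect to z₁ on polynomials. Then in the ring F[[w]] of formal power series in w over F the following identity holds: (α - β·w²)·(1 - w²)²·(1 + z₁²·w²) · [∑_{j≥0} z₀^{2j}·w^{2j}] · [∑_{j≥0} (j+1)·z₁^{2j}·w^{2j}] = α + (3α·z₁² - 2α - β + α·z₀²)·w² + ( (z₀²-1)²·(α·z₀² - β)/(z₀+z₁)² )·∑_{j≥0} z₀^{2j}·w^{2j+4} + ∑_{j≥0} w^{2j+4} · ∂( (z₁²-1)·( (α·z₀²-β)(z₀²-1)·z₀^{2j+1} - (α·z₁²-β)(z₁²-1)·z₁^{2j+1} ) / (z₀² - z₁²) ). (Here ∑ z^{2j}w^{2j} and ∑(j+1)z^{2j}w^{2j} are the expansions of 1/(1-z²w²) and 1/(1-z²w²)².) -/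

import Mathlib

noncomputable section

/-- The field `F = ℚ(α,β,z₀,z₁)` of rational functions in four indeterminates over `ℚ`. -/
abbrev FF : Type := FractionRing (MvPolynomial (Fin 4) ℚ)

def gα : FF := algebraMap (MvPolynomial (Fin 4) ℚ) FF (MvPolynomial.X 0)
def gβ : FF := algebraMap (MvPolynomial (Fin 4) ℚ) FF (MvPolynomial.X 1)
def gz0 : FF := algebraMap (MvPolynomial (Fin 4) ℚ) FF (MvPolynomial.X 2)
def gz1 : FF := algebraMap (MvPolynomial (Fin 4) ℚ) FF (MvPolynomial.X 3)

/-- `∑_{j≥0} z₀^{2j} w^{2j}`, the expansion of `1/(1-z₀²w²)`. -/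
def SA : PowerSeries FF :=
  PowerSeries.mk fun m => if m % 2 = 0 then gz0 ^ m else 0

/-- `∑_{j≥0} (j+1) z₁^{2j} w^{2j}`, the expansion of `1/(1-z₁²w²)²`. -/
def SB : PowerSeries FF :=
  PowerSeries.mk fun m => if m % 2 = 0 then ((m / 2 + 1 : ℕ) : FF) * gz1 ^ m else 0

/-- `∑_{j≥0} z₀^{2j} w^{2j+4}`. -/
def S4 : PowerSeries FF :=
  PowerSeries.mk fun m => if 4 ≤ m ∧ m % 2 = 0 then gz0 ^ (m - 4) else 0

/-- The rational function whose `∂/∂z₁`-derivative enters the recursion: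
`e j = (z₁²-1)((αz₀²-β)(z₀²-1)z₀^{2j+1} - (αz₁²-β)(z₁²-1)z₁^{2j+1})/(z₀²-z₁²)`. -/
def eTerm (j : ℕ) : FF :=
  (gz1 ^ 2 - 1) *
    ((gα * gz0 ^ 2 - gβ) * (gz0 ^ 2 - 1) * gz0 ^ (2 * j + 1)
      - (gα * gz1 ^ 2 - gβ) * (gz1 ^ 2 - 1) * gz1 ^ (2 * j + 1))
    / (gz0 ^ 2 - gz1 ^ 2)

/-!
Writing `A = 1/(1 - z₀²w²)`, `B = 1/(1 - z₁²w²)²` and `C = 1/(1 - z₁²w²)`, the quotient rule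
gives `(z₀² - z₁²)² ∂e_j = U z₀^{2j} + (V + (j+1) W) z₁^{2j}` for polynomials `U, V, W`
independent of `j`, so the derivative series is `(U A + V C + W B)/(z₀² - z₁²)²`. Clearing the
denominators `(z₀² - z₁²)² (1 - z₀²w²)(1 - z₁²w²)²` turns the identity into one between
polynomials in `w`.
Below, `x` and `y` play the roles of `z₀` and `z₁`.
-/

open PowerSeries

section EvenGeom

variable {R : Type*} [CommRing R]

def evenGeom (a : R) : R⟦X⟧ :=
  mk fun m => if m % 2 = 0 then a ^ m else 0

def evenGeomSq (a : R) : R⟦X⟧ :=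
  mk fun m => if m % 2 = 0 then ((m / 2 + 1 : ℕ) : R) * a ^ m else 0

theorem coeff_one_sub_C_mul_X_sq_mul (c : R) (f : R⟦X⟧) (n : ℕ) :
    coeff (n + 2) ((1 - C c * X ^ 2) * f) = coeff (n + 2) f - c * coeff n f := by
  rw [sub_mul, one_mul, mul_assoc, map_sub, coeff_C_mul, coeff_X_pow_mul', if_pos (by omega),
    Nat.add_sub_cancel]

theorem coeff_one_sub_C_mul_X_sq_mul_of_lt (c : R) (f : R⟦X⟧) {n : ℕ} (hn : n < 2) :
    coeff n ((1 - C c * X ^ 2) * f) = coeff n f := by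
  rw [sub_mul, one_mul, mul_assoc, map_sub, coeff_C_mul, coeff_X_pow_mul', if_neg (by omega),
    mul_zero, sub_zero]

theorem one_sub_C_sq_mul_X_sq_mul_evenGeom (a : R) :
    (1 - C (a ^ 2) * X ^ 2) * evenGeom a = 1 := by
  ext n
  match n with
  | 0 | 1 => rw [coeff_one_sub_C_mul_X_sq_mul_of_lt _ _ (by norm_num)]; simp [evenGeom]
  | n + 2 =>
    rw [coeff_one_sub_C_mul_X_sq_mul, coeff_one, if_neg (by omega)]
    simp only [evenGeom, coeff_mk, Nat.add_mod_right]
    split_ifs <;> ring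

theorem one_sub_C_sq_mul_X_sq_mul_evenGeomSq (a : R) :
    (1 - C (a ^ 2) * X ^ 2) * evenGeomSq a = evenGeom a := by
  ext n
  match n with
  | 0 | 1 =>
    rw [coeff_one_sub_C_mul_X_sq_mul_of_lt _ _ (by norm_num)]; simp [evenGeom, evenGeomSq]
  | n + 2 =>
    rw [coeff_one_sub_C_mul_X_sq_mul]
    simp only [evenGeom, evenGeomSq, coeff_mk, Nat.add_mod_right, Nat.add_div_right _ two_pos]
    split_ifs
    · push_cast; ring
    · ring

theorem one_sub_C_sq_mul_X_sq_sq_mul_evenGeomSq (a : R) :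
    (1 - C (a ^ 2) * X ^ 2) ^ 2 * evenGeomSq a = 1 := by
  rw [sq, mul_assoc, one_sub_C_sq_mul_X_sq_mul_evenGeomSq, one_sub_C_sq_mul_X_sq_mul_evenGeom]

end EvenGeom

section Dessin

variable {K : Type*} [Field K] (α β x y : K)

def dessinE (j : ℕ) : K :=
  (y ^ 2 - 1) * ((α * x ^ 2 - β) * (x ^ 2 - 1) * x ^ (2 * j + 1)
      - (α * y ^ 2 - β) * (y ^ 2 - 1) * y ^ (2 * j + 1)) / (x ^ 2 - y ^ 2)

def dessinDerivU : K := 2 * x * y * (α * x ^ 2 - β) * (x ^ 2 - 1) ^ 2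

def dessinDerivV : K :=
  -(x ^ 2 - y ^ 2) * (y ^ 2 - 1) * (2 * y ^ 2 * (3 * α * y ^ 2 - α - 2 * β)
      - (y ^ 2 - 1) * (α * y ^ 2 - β))
    - 2 * y ^ 2 * (y ^ 2 - 1) ^ 2 * (α * y ^ 2 - β)

def dessinDerivW : K := -2 * (x ^ 2 - y ^ 2) * (y ^ 2 - 1) ^ 2 * (α * y ^ 2 - β)

def dessinDerivNum (j : ℕ) : K :=
  dessinDerivU α β x y * x ^ (2 * j)
    + (dessinDerivV α β x y + (j + 1) * dessinDerivW α β x y) * y ^ (2 * j)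

variable {α β x y}

theorem sq_sub_sq_sq_smul_derivation_dessinE {A M : Type*} [CommRing A] [Algebra A K]
    [AddCommGroup M] [Module A M] [Module K M] {D : Derivation A K M} (hxy : x ^ 2 ≠ y ^ 2)
    (hα : D α = 0) (hβ : D β = 0) (hx : D x = 0) (j : ℕ) :
    (x ^ 2 - y ^ 2) ^ 2 • D (dessinE α β x y j) = dessinDerivNum α β x y j • D y := by
  have hne : x ^ 2 - y ^ 2 ≠ 0 := sub_ne_zero.mpr hxy
  simp only [dessinE, Derivation.leibniz_div, Derivation.leibniz, Derivation.leibniz_pow, map_sub,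
    Derivation.map_one_eq_zero, hα, hβ, hx, Nat.add_sub_cancel]
  match_scalars
  field_simp
  rw [dessinDerivNum, dessinDerivU, dessinDerivV, dessinDerivW]
  push_cast
  ring

theorem C_sq_sub_sq_sq_mul_evenSeries {d : ℕ → K}
    (hd : ∀ j, (x ^ 2 - y ^ 2) ^ 2 * d j = dessinDerivNum α β x y j) :
    C ((x ^ 2 - y ^ 2) ^ 2) * mk (fun m => if m % 2 = 0 then d (m / 2) else 0)
      = C (dessinDerivU α β x y) * evenGeom x + C (dessinDerivV α β x y) * evenGeom y
        + C (dessinDerivW α β x y) * evenGeomSq y := by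
  ext m
  simp only [map_add, coeff_C_mul, evenGeom, evenGeomSq, coeff_mk]
  split_ifs with hm
  · rw [hd, dessinDerivNum, show 2 * (m / 2) = m by omega]
    push_cast
    ring
  · simp

theorem sq_sub_sq_sq_mul_div_add_sq (a : K) (hxy : x + y ≠ 0) :
    (x ^ 2 - y ^ 2) ^ 2 * (a / (x + y) ^ 2) = a * (x - y) ^ 2 := by
  field_simp
  ring

theorem dessin_key_identity {d : ℕ → K} (hxy : x ^ 2 ≠ y ^ 2)
    (hd : ∀ j, (x ^ 2 - y ^ 2) ^ 2 * d j = dessinDerivNum α β x y j) :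
    (C α - C β * X ^ 2) * (1 - X ^ 2) ^ 2 * (1 + C (y ^ 2) * X ^ 2) * evenGeom x * evenGeomSq y
      = C α + C (3 * α * y ^ 2 - 2 * α - β + α * x ^ 2) * X ^ 2
        + C ((x ^ 2 - 1) ^ 2 * (α * x ^ 2 - β) / (x + y) ^ 2) * (evenGeom x * X ^ 4)
        + mk (fun m => if m % 2 = 0 then d (m / 2) else 0) * X ^ 4 := by
  set P : K⟦X⟧ := (C α - C β * X ^ 2) * (1 - X ^ 2) ^ 2 * (1 + C (y ^ 2) * X ^ 2)
  set q₀ : K⟦X⟧ := 1 - C (x ^ 2) * X ^ 2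
  set q₁ : K⟦X⟧ := 1 - C (y ^ 2) * X ^ 2
  set k : K⟦X⟧ := C ((x ^ 2 - y ^ 2) ^ 2)
  set c₄ : K := (x ^ 2 - 1) ^ 2 * (α * x ^ 2 - β)
  have hne : x ^ 2 - y ^ 2 ≠ 0 := sub_ne_zero.mpr hxy
  have hA : q₀ * evenGeom x = 1 := one_sub_C_sq_mul_X_sq_mul_evenGeom x
  have hC : q₁ * evenGeom y = 1 := one_sub_C_sq_mul_X_sq_mul_evenGeom y
  have hB : q₁ ^ 2 * evenGeomSq y = 1 := one_sub_C_sq_mul_X_sq_sq_mul_evenGeomSq y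
  have hT := C_sq_sub_sq_sq_mul_evenSeries hd
  have hc₄ : k * C (c₄ / (x + y) ^ 2) = C (c₄ * (x - y) ^ 2) := by
    rw [← map_mul, sq_sub_sq_sq_mul_div_add_sq]
    exact fun h => hne (by linear_combination (x - y) * h)
  have hden : k * (q₀ * q₁ ^ 2) ≠ 0 :=
    mul_ne_zero ((map_ne_zero C).mpr (pow_ne_zero 2 hne))
      (mul_ne_zero (left_ne_zero_of_mul_eq_one hA) (left_ne_zero_of_mul_eq_one hB))
  refine mul_left_cancel₀ hden ?_
  calc k * (q₀ * q₁ ^ 2) * (P * evenGeom x * evenGeomSq y)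
      _ = k * P := by linear_combination k * P * q₁ ^ 2 * evenGeomSq y * hA + k * P * hB
      _ = k * q₀ * q₁ ^ 2 * (C α + C (3 * α * y ^ 2 - 2 * α - β + α * x ^ 2) * X ^ 2)
          + C (c₄ * (x - y) ^ 2) * q₁ ^ 2 * X ^ 4
          + (C (dessinDerivU α β x y) * q₁ ^ 2 + C (dessinDerivV α β x y) * q₀ * q₁
            + C (dessinDerivW α β x y) * q₀) * X ^ 4 := by
        simp only [P, k, q₀, q₁, c₄, dessinDerivU, dessinDerivV, dessinDerivW, map_mul, map_sub,
          map_pow, map_ofNat, map_neg, map_add, map_one]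
        ring
      _ = _ := by
        linear_combination (-(q₁ ^ 2 * X ^ 4 * C (c₄ * (x - y) ^ 2)
            + X ^ 4 * C (dessinDerivU α β x y) * q₁ ^ 2)) * hA
          - X ^ 4 * C (dessinDerivV α β x y) * q₀ * q₁ * hC
          - X ^ 4 * C (dessinDerivW α β x y) * q₀ * hB
          - q₀ * q₁ ^ 2 * X ^ 4 * evenGeom x * hc₄ - q₀ * q₁ ^ 2 * X ^ 4 * hT

end Dessin

theorem gz0_sq_ne_gz1_sq : gz0 ^ 2 ≠ gz1 ^ 2 := by
  simp only [gz0, gz1, ← map_pow, Ne,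
    (IsFractionRing.injective (MvPolynomial (Fin 4) ℚ) FF).eq_iff]
  intro h
  simpa using congrArg (MvPolynomial.eval fun i => if i = 2 then (1 : ℚ) else 0) h

/-- The key generating-function identity (in the auxiliary variable `w`) verifying the
Eynard–Orantin topological recursion for the dessin `n`-point functions. The derivative
with respect to `z₁` is the (unique) derivation `∂` on `ℚ(α,β,z₀,z₁)` killing `α, β, z₀`
with `∂z₁ = 1`. -/
theorem dessin_EO_key_identity
    (D : Derivation ℚ FF FF)
    (hDα : D gα = 0) (hDβ : D gβ = 0) (hDz0 : D gz0 = 0) (hDz1 : D gz1 = 1) :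
    (PowerSeries.C gα - PowerSeries.C gβ * PowerSeries.X ^ 2)
        * (1 - PowerSeries.X ^ 2) ^ 2
        * (1 + PowerSeries.C (gz1 ^ 2) * PowerSeries.X ^ 2) * SA * SB
      = PowerSeries.C gα
        + PowerSeries.C (3 * gα * gz1 ^ 2 - 2 * gα - gβ + gα * gz0 ^ 2) * PowerSeries.X ^ 2
        + PowerSeries.C
            ((gz0 ^ 2 - 1) ^ 2 * (gα * gz0 ^ 2 - gβ) / (gz0 + gz1) ^ 2) * S4
        + PowerSeries.mk (fun m =>
            if 4 ≤ m ∧ m % 2 = 0 then D (eTerm ((m - 4) / 2)) else 0) := by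
  have hS4 : S4 = evenGeom gz0 * X ^ 4 := by
    ext m
    simp only [S4, evenGeom, coeff_mk, coeff_mul_X_pow']
    split_ifs <;> first | rfl | omega
  have hT : PowerSeries.mk (fun m => if 4 ≤ m ∧ m % 2 = 0 then D (eTerm ((m - 4) / 2)) else 0)
      = mk (fun m => if m % 2 = 0 then D (dessinE gα gβ gz0 gz1 (m / 2)) else 0) * X ^ 4 := by
    ext m
    simp only [coeff_mk, coeff_mul_X_pow']
    split_ifs <;> first | rfl | omega
  have hD (j : ℕ) :
      (gz0 ^ 2 - gz1 ^ 2) ^ 2 * D (dessinE gα gβ gz0 gz1 j) = dessinDerivNum gα gβ gz0 gz1 j := by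
    simpa [hDz1] using sq_sub_sq_sq_smul_derivation_dessinE gz0_sq_ne_gz1_sq hDα hDβ hDz0 j
  rw [hS4, hT]
  -- `(e :)` elaborates `e` first: unifying against the goal, whose ring structure on `FF` comes
  -- from `OreLocalization` rather than from `Field`, times out.
  exact (dessin_key_identity gz0_sq_ne_gz1_sq hD :)
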